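/- arXiv:1707.01971 — 2 statements merged into one kernel-verified Lean document; each statement's English description precedes it below -/
import Mathlib

section
/- Assume Q ≠ 0 and let τ be the least positive integer s such that there exist ℓ_1,...,ℓ_s in Q* generating Q* as a Q-module. Then τ ≤ D, and for every tuple (ℓ_1,...,ℓ_τ) of elements of Q* that generates Q* as a Q-module, the sequence of ideals ann(u_{ℓ_1},...,u_{ℓ_t}) for t = 1,...,τ is strictly decreasing and ann(u_{ℓ_1},...,u_{ℓ_τ}) = I. -/
open MvPolynomial

/-- `⟨u ∣ f⟩ = ∑_m f_m u(m)`, the pairing of a sequence `u : ℕ^n → K`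
with a polynomial `f ∈ K[X_1,…,X_n]`. -/
noncomputable def seqBracket {K : Type*} [Field K] {n : ℕ}
    (u : (Fin n →₀ ℕ) → K) (f : MvPolynomial (Fin n) K) : K :=
  (AddMonoidAlgebra.coeff f).sum fun m c => c * u m

/-- The action of polynomials on sequences: `(f·u)(m) = ⟨u ∣ X^m f⟩`. -/
noncomputable def seqAct {K : Type*} [Field K] {n : ℕ}
    (f : MvPolynomial (Fin n) K) (u : (Fin n →₀ ℕ) → K) : (Fin n →₀ ℕ) → K :=
  fun m => seqBracket u (monomial m 1 * f)

/-- The sequence `u_ℓ(m) = ℓ(X^m mod I)` attached to a linear form `ℓ` on `K[X]/I`. -/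
noncomputable def useq {K : Type*} [Field K] {n : ℕ}
    (I : Ideal (MvPolynomial (Fin n) K))
    (ℓ : Module.Dual K (MvPolynomial (Fin n) K ⧸ I)) : (Fin n →₀ ℕ) → K :=
  fun m => ℓ (Ideal.Quotient.mk I (monomial m 1))

/-- `ℓ_1,…,ℓ_s` generate `Q*` as a `Q`-module: every `φ ∈ Q*` can be written
as `φ = ∑ g_i·ℓ_i` where `(g·ℓ)(h) = ℓ(gh)`. -/
def GeneratesDual {K : Type*} [Field K] {n : ℕ}
    (I : Ideal (MvPolynomial (Fin n) K)) {s : ℕ}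
    (ℓ : Fin s → Module.Dual K (MvPolynomial (Fin n) K ⧸ I)) : Prop :=
  ∀ φ : Module.Dual K (MvPolynomial (Fin n) K ⧸ I),
    ∃ g : Fin s → MvPolynomial (Fin n) K ⧸ I,
      φ = ∑ i, (ℓ i).comp (LinearMap.mulLeft K (g i))

/-! Make `Q*` a `Q`-module by `(g • ℓ) x = ℓ (g * x)`. The polynomials killing all `u_{ℓ_i}`,
`i ∈ s`, are the preimage in `K[X]` of the coannihilator of the `Q`-submodule generated by these
`ℓ_i`, and since `Q` is finite-dimensional this coannihilator determines the submodule. So if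
adding `ℓ_{t+1}` does not shrink the annihilator, `ℓ_{t+1}` lies in the submodule generated by
`ℓ_1, …, ℓ_t`, and dropping it leaves a generating family of size `τ - 1`, against minimality.
For the whole family the submodule is `Q*`, whose coannihilator is `0`, so the annihilator is
`I`; and a `K`-basis of `Q*` already generates it, so `τ ≤ D`. -/

open Module Set

section DualSpan

variable {K A ι : Type*} [Field K] [CommRing A] [Algebra K A]

/-- `g ↦ g • ℓ` for the `A`-module structure `(g • ℓ) x = ℓ (g * x)` on `Dual K A`. -/
def dualSmul (ℓ : Dual K A) : A →ₗ[K] Dual K A :=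
  (LinearMap.mul K A).compr₂ ℓ

lemma dualSmul_apply (ℓ : Dual K A) (g x : A) : dualSmul ℓ g x = ℓ (g * x) := rfl

lemma dualSmul_one (ℓ : Dual K A) : dualSmul ℓ 1 = ℓ := by
  ext
  simp [dualSmul_apply]

/-- The `A`-submodule of `Dual K A` generated by the `ℓ i` with `i ∈ s`. -/
def dualSpan (ℓ : ι → Dual K A) (s : Set ι) : Submodule K (Dual K A) :=
  ⨆ i ∈ s, LinearMap.range (dualSmul (ℓ i))

variable {ℓ : ι → Dual K A} {s : Set ι}

lemma dualSmul_mem_dualSpan {i : ι} (hi : i ∈ s) (g : A) :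
    dualSmul (ℓ i) g ∈ dualSpan ℓ s :=
  le_iSup₂ (f := fun i _ => LinearMap.range (dualSmul (ℓ i))) i hi (LinearMap.mem_range_self _ g)

lemma mem_dualSpan {i : ι} (hi : i ∈ s) : ℓ i ∈ dualSpan ℓ s :=
  dualSmul_one (ℓ i) ▸ dualSmul_mem_dualSpan hi 1

lemma dualSpan_mono {t : Set ι} (h : s ⊆ t) : dualSpan ℓ s ≤ dualSpan ℓ t :=
  biSup_mono h

lemma comp_mulLeft_mem_dualSpan {φ : Dual K A} (hφ : φ ∈ dualSpan ℓ s) (g : A) :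
    φ ∘ₗ LinearMap.mulLeft K g ∈ dualSpan ℓ s := by
  suffices (dualSpan ℓ s).map (LinearMap.lcomp K K (LinearMap.mulLeft K g)) ≤ dualSpan ℓ s
    from this (Submodule.mem_map_of_mem hφ)
  simp only [dualSpan, Submodule.map_iSup, ← LinearMap.range_comp]
  refine iSup₂_mono fun i _ => ?_
  rintro _ ⟨a, rfl⟩
  exact ⟨a * g, by ext x; simp [dualSmul_apply, mul_assoc]⟩

lemma dualSpan_insert_of_mem {j : ι} (hj : ℓ j ∈ dualSpan ℓ s) :
    dualSpan ℓ (insert j s) = dualSpan ℓ s := by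
  refine iSup_insert.trans (sup_eq_right.mpr ?_)
  rintro _ ⟨g, rfl⟩
  exact comp_mulLeft_mem_dualSpan hj g

lemma dualSpan_comp {κ : Type*} (ℓ : ι → Dual K A) (f : κ → ι) :
    dualSpan (ℓ ∘ f) univ = dualSpan ℓ (range f) := by
  simp only [dualSpan, iSup_univ, iSup_range, Function.comp_apply]

lemma mem_dualSpan_univ_iff [Fintype ι] {φ : Dual K A} :
    φ ∈ dualSpan ℓ univ ↔ ∃ g : ι → A, φ = ∑ i, ℓ i ∘ₗ LinearMap.mulLeft K (g i) := by
  have hspan : dualSpan ℓ univ = ⨆ i ∈ Finset.univ, LinearMap.range (dualSmul (ℓ i)) := by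
    simp [dualSpan]
  rw [hspan, Submodule.mem_iSup_finset_iff_exists_sum]
  constructor
  · rintro ⟨μ, rfl⟩
    choose g hg using fun i => (μ i).2
    exact ⟨g, by simp only [← hg]; rfl⟩
  · rintro ⟨g, rfl⟩
    exact ⟨fun i => ⟨dualSmul (ℓ i) (g i), LinearMap.mem_range_self _ _⟩, rfl⟩

lemma dualSpan_univ_eq_top_iff [Fintype ι] :
    dualSpan ℓ univ = ⊤ ↔
      ∀ φ : Dual K A, ∃ g : ι → A, φ = ∑ i, ℓ i ∘ₗ LinearMap.mulLeft K (g i) := by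
  simp only [Submodule.eq_top_iff', mem_dualSpan_univ_iff]

lemma mem_dualCoannihilator_dualSpan {x : A} :
    x ∈ (dualSpan ℓ s).dualCoannihilator ↔ ∀ i ∈ s, ∀ g, ℓ i (g * x) = 0 := by
  simp only [dualSpan, Submodule.dualCoannihilator_iSup_eq, Submodule.mem_iInf,
    Submodule.mem_dualCoannihilator, LinearMap.mem_range, forall_exists_index,
    forall_apply_eq_imp_iff, dualSmul_apply]

lemma dualSpan_succAbove_eq_top {m : ℕ} {ℓ : Fin (m + 1) → Dual K A}
    (htop : dualSpan ℓ univ = ⊤) {j : Fin (m + 1)} (hj : ℓ j ∈ dualSpan ℓ {j}ᶜ) :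
    dualSpan (ℓ ∘ j.succAbove) univ = ⊤ := by
  rw [dualSpan_comp, Fin.range_succAbove, ← dualSpan_insert_of_mem hj, insert_eq,
    union_compl_self, htop]

lemma exists_dualSpan_eq_top_of_finrank [FiniteDimensional K A] :
    ∃ ℓ : Fin (finrank K A) → Dual K A, dualSpan ℓ univ = ⊤ := by
  let b := finBasisOfFinrankEq K (Dual K A) Subspace.dual_finrank_eq
  refine ⟨b, eq_top_iff.mpr ?_⟩
  rw [← b.span_eq, Submodule.span_le]
  rintro _ ⟨i, rfl⟩
  exact mem_dualSpan (mem_univ i)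

end DualSpan

section Quotient

variable {K : Type*} [Field K] {n : ℕ} (I : Ideal (MvPolynomial (Fin n) K))

lemma seqBracket_useq (ℓ : Dual K (MvPolynomial (Fin n) K ⧸ I)) (f : MvPolynomial (Fin n) K) :
    seqBracket (useq I ℓ) f = ℓ (Ideal.Quotient.mk I f) := by
  conv_rhs => rw [f.as_sum]
  simp only [seqBracket, useq, Finsupp.sum, map_sum]
  refine Finset.sum_congr rfl fun m _ => ?_
  rw [← smul_eq_mul, ← map_smul, ← Ideal.Quotient.mkₐ_eq_mk K, ← map_smul, smul_monomial,
    smul_eq_mul, mul_one]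
  rfl

lemma seqAct_useq_eq_zero_iff (ℓ : Dual K (MvPolynomial (Fin n) K ⧸ I))
    (f : MvPolynomial (Fin n) K) :
    seqAct f (useq I ℓ) = 0 ↔ ∀ g, ℓ (g * Ideal.Quotient.mk I f) = 0 := by
  simp only [funext_iff, seqAct, seqBracket_useq, map_mul, Pi.zero_apply]
  constructor
  · intro h g
    obtain ⟨p, rfl⟩ := Ideal.Quotient.mk_surjective g
    have hL : ℓ ∘ₗ LinearMap.mulRight K (Ideal.Quotient.mk I f) ∘ₗ
        (Ideal.Quotient.mkₐ K I).toLinearMap = 0 :=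
      (basisMonomials (Fin n) K).ext fun m => by simpa [coe_basisMonomials] using h m
    simpa using LinearMap.congr_fun hL p
  · exact fun h m => h _

variable {ι : Type*}

lemma setOf_seqAct_useq_eq_zero (ℓ : ι → Dual K (MvPolynomial (Fin n) K ⧸ I)) (s : Set ι) :
    {f | ∀ i ∈ s, seqAct f (useq I (ℓ i)) = 0} =
      Ideal.Quotient.mk I ⁻¹' (dualSpan ℓ s).dualCoannihilator := by
  ext f
  simp only [Set.mem_ofPred_eq, Set.mem_preimage, SetLike.mem_coe,
    mem_dualCoannihilator_dualSpan, seqAct_useq_eq_zero_iff]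

lemma dualSpan_eq_of_setOf_seqAct_useq_eq_zero
    [FiniteDimensional K (MvPolynomial (Fin n) K ⧸ I)]
    {ℓ : ι → Dual K (MvPolynomial (Fin n) K ⧸ I)} {s s' : Set ι}
    (h : {f | ∀ i ∈ s, seqAct f (useq I (ℓ i)) = 0} =
      {f | ∀ i ∈ s', seqAct f (useq I (ℓ i)) = 0}) :
    dualSpan ℓ s = dualSpan ℓ s' := by
  rw [setOf_seqAct_useq_eq_zero, setOf_seqAct_useq_eq_zero,
    (Set.preimage_injective.mpr Ideal.Quotient.mk_surjective).eq_iff, SetLike.coe_set_eq] at h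
  rw [← Subspace.dualCoannihilator_dualAnnihilator_eq (W := dualSpan ℓ s), h,
    Subspace.dualCoannihilator_dualAnnihilator_eq]

end Quotient

theorem stmt7_general {K : Type*} [Field K] {n : ℕ}
    (I : Ideal (MvPolynomial (Fin n) K))
    (hI : FiniteDimensional K (MvPolynomial (Fin n) K ⧸ I))
    (hQ : Nontrivial (MvPolynomial (Fin n) K ⧸ I))
    (τ : ℕ)
    (hτmin : ∀ s : ℕ, 0 < s →
        (∃ ℓ : Fin s → Module.Dual K (MvPolynomial (Fin n) K ⧸ I),
          GeneratesDual I ℓ) → τ ≤ s) :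
    τ ≤ Module.finrank K (MvPolynomial (Fin n) K ⧸ I) ∧
    ∀ ℓ : Fin τ → Module.Dual K (MvPolynomial (Fin n) K ⧸ I),
      GeneratesDual I ℓ →
        (∀ t : ℕ, 1 ≤ t → t < τ →
          {f : MvPolynomial (Fin n) K |
              ∀ i : Fin τ, (i : ℕ) < t + 1 → seqAct f (useq I (ℓ i)) = 0} ⊂
          {f : MvPolynomial (Fin n) K |
              ∀ i : Fin τ, (i : ℕ) < t → seqAct f (useq I (ℓ i)) = 0}) ∧
        (∀ f : MvPolynomial (Fin n) K,
          (∀ i, seqAct f (useq I (ℓ i)) = 0) ↔ f ∈ I) := by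
  obtain ⟨ℓ₀, hℓ₀⟩ :=
    exists_dualSpan_eq_top_of_finrank (K := K) (A := MvPolynomial (Fin n) K ⧸ I)
  refine ⟨hτmin _ finrank_pos ⟨ℓ₀, dualSpan_univ_eq_top_iff.mp hℓ₀⟩, fun ℓ hgen => ?_⟩
  have htop : dualSpan ℓ univ = ⊤ := dualSpan_univ_eq_top_iff.mpr hgen
  refine ⟨fun t ht htτ => Set.ssubset_iff_subset_ne.mpr
    ⟨fun f hf i hi => hf i (by omega), fun hann => ?_⟩, fun f => ?_⟩
  · obtain ⟨m, rfl⟩ : ∃ m, τ = m + 1 := ⟨τ - 1, by omega⟩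
    have hspan : dualSpan ℓ {i | (i : ℕ) < t + 1} = dualSpan ℓ {i | (i : ℕ) < t} :=
      dualSpan_eq_of_setOf_seqAct_useq_eq_zero I hann
    have hj : ℓ ⟨t, htτ⟩ ∈ dualSpan ℓ {i | (i : ℕ) < t} :=
      hspan ▸ mem_dualSpan (Nat.lt_succ_self t)
    replace hj : ℓ ⟨t, htτ⟩ ∈ dualSpan ℓ {⟨t, htτ⟩}ᶜ :=
      dualSpan_mono (fun i hi => Fin.ne_of_val_ne (Nat.ne_of_lt hi)) hj
    have := hτmin m (by omega)
      ⟨_, dualSpan_univ_eq_top_iff.mp (dualSpan_succAbove_eq_top htop hj)⟩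
    omega
  · simpa [htop, Ideal.Quotient.eq_zero_iff_mem] using
      Set.ext_iff.mp (setOf_seqAct_useq_eq_zero I ℓ univ) f

/-- Assume `Q ≠ 0` and let `τ` be the least positive integer `s`
such that some `ℓ_1,…,ℓ_s ∈ Q*` generate `Q*` as a `Q`-module. Then `τ ≤ D`, and
for every tuple `(ℓ_1,…,ℓ_τ)` generating `Q*` as a `Q`-module, the ideals
`ann(u_{ℓ_1},…,u_{ℓ_t})`, `t = 1,…,τ`, are strictly decreasing and
`ann(u_{ℓ_1},…,u_{ℓ_τ}) = I`. -/
theorem stmt7 {K : Type*} [Field K] {n : ℕ} (hn : 1 ≤ n)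
    (I : Ideal (MvPolynomial (Fin n) K))
    (hI : FiniteDimensional K (MvPolynomial (Fin n) K ⧸ I))
    (hQ : Nontrivial (MvPolynomial (Fin n) K ⧸ I))
    (τ : ℕ) (hτpos : 0 < τ)
    (hτgen : ∃ ℓ : Fin τ → Module.Dual K (MvPolynomial (Fin n) K ⧸ I),
        GeneratesDual I ℓ)
    (hτmin : ∀ s : ℕ, 0 < s →
        (∃ ℓ : Fin s → Module.Dual K (MvPolynomial (Fin n) K ⧸ I),
          GeneratesDual I ℓ) → τ ≤ s) :
    τ ≤ Module.finrank K (MvPolynomial (Fin n) K ⧸ I) ∧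
    ∀ ℓ : Fin τ → Module.Dual K (MvPolynomial (Fin n) K ⧸ I),
      GeneratesDual I ℓ →
        (∀ t : ℕ, 1 ≤ t → t < τ →
          {f : MvPolynomial (Fin n) K |
              ∀ i : Fin τ, (i : ℕ) < t + 1 → seqAct f (useq I (ℓ i)) = 0} ⊂
          {f : MvPolynomial (Fin n) K |
              ∀ i : Fin τ, (i : ℕ) < t → seqAct f (useq I (ℓ i)) = 0}) ∧
        (∀ f : MvPolynomial (Fin n) K,
          (∀ i, seqAct f (useq I (ℓ i)) = 0) ↔ f ∈ I) :=
  stmt7_general I hI hQ τ hτmin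
end

section
/- Let u_1,...,u_t : ℕ^n → K be sequences and suppose their K-linear span V in the space of sequences is stable under the shift operators s_j(u)(m) = u(m + e_j) for j = 1,...,n (equivalently, f·u_i belongs to V for every polynomial f and every i). Then ann(u_1,...,u_t) = ker(u_1,...,u_t), and dim_K K[X_1,...,X_n]/ann(u_1,...,u_t) ≤ t. -/
/-!
Evaluating `f·u_i` at the origin gives `⟨u_i ∣ f⟩`, so `ann ⊆ ker`. Conversely `(f·u_i)(m)` is the
pairing of `f` with the shifted sequence `k ↦ u_i(k + m)`, which by shift-stability is a linear
combination of the `u_j`; so `ker ⊆ ann`. Hence `J` is the kernel of the `K`-linear map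
`f ↦ (⟨u_i ∣ f⟩)_i` into `K^t`, and `K[X]/J` embeds into `K^t`.
-/

open MvPolynomial

theorem Ideal.finiteDimensional_quotient_and_finrank_le_of_mem_iff {K R V : Type*} [Field K]
    [CommRing R] [Algebra K R] [AddCommGroup V] [Module K V] [FiniteDimensional K V]
    (J : Ideal R) (L : R →ₗ[K] V) (hJ : ∀ f, f ∈ J ↔ L f = 0) :
    FiniteDimensional K (R ⧸ J) ∧ Module.finrank K (R ⧸ J) ≤ Module.finrank K V := by
  have hker : J.restrictScalars K = LinearMap.ker L := by ext f; exact hJ f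
  let ψ : (R ⧸ J) →ₗ[K] V := (J.restrictScalars K).liftQ L hker.le ∘ₗ
    (Submodule.Quotient.restrictScalarsEquiv K J).symm.toLinearMap
  have hψ : Function.Injective ψ :=
    (LinearMap.ker_eq_bot.mp (Submodule.ker_liftQ_eq_bot _ _ hker.le hker.ge)).comp
      (Submodule.Quotient.restrictScalarsEquiv K J).symm.injective
  exact ⟨.of_injective ψ hψ, LinearMap.finrank_le_finrank_of_injective hψ⟩

section Sequences

variable {K : Type*} [Field K] {n : ℕ}

noncomputable def seqBracketₗ (u : (Fin n →₀ ℕ) → K) : MvPolynomial (Fin n) K →ₗ[K] K :=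
  Finsupp.linearCombination K u ∘ₗ (AddMonoidAlgebra.coeffLinearEquiv K).toLinearMap

theorem seqBracketₗ_apply (u : (Fin n →₀ ℕ) → K) (f : MvPolynomial (Fin n) K) :
    seqBracketₗ u f = seqBracket u f :=
  rfl

theorem seqBracket_monomial (u : (Fin n →₀ ℕ) → K) (m : Fin n →₀ ℕ) (c : K) :
    seqBracket u (monomial m c) = c * u m := by
  rw [← seqBracketₗ_apply, seqBracketₗ, LinearMap.comp_apply, LinearEquiv.coe_coe,
    AddMonoidAlgebra.coeffLinearEquiv_apply, ← single_eq_monomial, AddMonoidAlgebra.coeff_single,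
    Finsupp.linearCombination_single, smul_eq_mul]

theorem seqBracket_add (u : (Fin n →₀ ℕ) → K) (f g : MvPolynomial (Fin n) K) :
    seqBracket u (f + g) = seqBracket u f + seqBracket u g :=
  map_add (seqBracketₗ u) f g

theorem seqBracket_monomial_one_mul (u : (Fin n →₀ ℕ) → K) (m : Fin n →₀ ℕ)
    (f : MvPolynomial (Fin n) K) :
    seqBracket u (monomial m 1 * f) = seqBracket (fun k => u (k + m)) f := by
  induction f using MvPolynomial.induction_on' with
  | monomial k c => rw [monomial_mul, one_mul, seqBracket_monomial, seqBracket_monomial, add_comm]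
  | add p q hp hq => rw [mul_add, seqBracket_add, seqBracket_add, hp, hq]

theorem seqBracket_sum_mul {t : ℕ} (c : Fin t → K) (u : Fin t → (Fin n →₀ ℕ) → K)
    (f : MvPolynomial (Fin n) K) :
    seqBracket (fun k => ∑ j, c j * u j k) f = ∑ j, c j * seqBracket (u j) f := by
  induction f using MvPolynomial.induction_on' with
  | monomial k a =>
    simp only [seqBracket_monomial, Finset.mul_sum]
    exact Finset.sum_congr rfl fun j _ => mul_left_comm _ _ _
  | add p q hp hq => simp only [seqBracket_add, hp, hq, mul_add, Finset.sum_add_distrib]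

theorem seqAct_apply (f : MvPolynomial (Fin n) K) (u : (Fin n →₀ ℕ) → K) (m : Fin n →₀ ℕ) :
    seqAct f u m = seqBracket (fun k => u (k + m)) f :=
  seqBracket_monomial_one_mul u m f

theorem seqAct_monomial_one (u : (Fin n →₀ ℕ) → K) (m : Fin n →₀ ℕ) :
    seqAct (monomial m 1) u = fun k => u (k + m) := by
  funext k
  rw [seqAct_apply, seqBracket_monomial, one_mul, add_comm]

theorem seqAct_apply_zero (f : MvPolynomial (Fin n) K) (u : (Fin n →₀ ℕ) → K) :
    seqAct f u 0 = seqBracket u f := by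
  simp only [seqAct_apply, add_zero]

theorem forall_seqAct_eq_zero_iff_of_shift_stable {t : ℕ} {u : Fin t → (Fin n →₀ ℕ) → K}
    (hstable : ∀ (f : MvPolynomial (Fin n) K) (i : Fin t),
        ∃ c : Fin t → K, seqAct f (u i) = fun m => ∑ j, c j * u j m)
    (f : MvPolynomial (Fin n) K) :
    (∀ i, seqAct f (u i) = 0) ↔ ∀ i, seqBracket (u i) f = 0 := by
  refine ⟨fun hf i => by rw [← seqAct_apply_zero, hf i, Pi.zero_apply], fun hf i => ?_⟩
  funext m
  obtain ⟨c, hc⟩ := hstable (monomial m 1) i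
  rw [seqAct_monomial_one] at hc
  rw [seqAct_apply, hc, seqBracket_sum_mul]
  simp [hf]

end Sequences

theorem stmt9_general {K : Type*} [Field K] {n : ℕ} (t : ℕ)
    (u : Fin t → (Fin n →₀ ℕ) → K)
    (hstable : ∀ (f : MvPolynomial (Fin n) K) (i : Fin t),
        ∃ c : Fin t → K, seqAct f (u i) = fun m => ∑ j, c j * u j m)
    (J : Ideal (MvPolynomial (Fin n) K))
    (hJ : ∀ f : MvPolynomial (Fin n) K, f ∈ J ↔ ∀ i, seqAct f (u i) = 0) :
    (∀ f : MvPolynomial (Fin n) K, f ∈ J ↔ ∀ i, seqBracket (u i) f = 0) ∧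
    FiniteDimensional K (MvPolynomial (Fin n) K ⧸ J) ∧
    Module.finrank K (MvPolynomial (Fin n) K ⧸ J) ≤ t := by
  have hker (f) : f ∈ J ↔ ∀ i, seqBracket (u i) f = 0 :=
    (hJ f).trans (forall_seqAct_eq_zero_iff_of_shift_stable hstable f)
  obtain ⟨hfin, hrank⟩ := J.finiteDimensional_quotient_and_finrank_le_of_mem_iff
    (LinearMap.pi fun i => seqBracketₗ (u i)) fun f => by
      simp only [hker f, funext_iff, LinearMap.pi_apply, seqBracketₗ_apply, Pi.zero_apply]
  exact ⟨hker, hfin, by rwa [Module.finrank_fin_fun] at hrank⟩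

/-- Let `u_1,…,u_t` be sequences whose `K`-linear span is stable
under the shift operators (equivalently, each `f·u_i` is a `K`-linear combination
of `u_1,…,u_t`). Let `J = ann(u_1,…,u_t)` (given as an ideal). Then
`ann(u_1,…,u_t) = ker(u_1,…,u_t)` and `dim_K K[X]/J ≤ t`. -/
theorem stmt9 {K : Type*} [Field K] {n : ℕ} (hn : 1 ≤ n) (t : ℕ)
    (u : Fin t → (Fin n →₀ ℕ) → K)
    (hstable : ∀ (f : MvPolynomial (Fin n) K) (i : Fin t),
        ∃ c : Fin t → K, seqAct f (u i) = fun m => ∑ j, c j * u j m)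
    (J : Ideal (MvPolynomial (Fin n) K))
    (hJ : ∀ f : MvPolynomial (Fin n) K, f ∈ J ↔ ∀ i, seqAct f (u i) = 0) :
    (∀ f : MvPolynomial (Fin n) K, f ∈ J ↔ ∀ i, seqBracket (u i) f = 0) ∧
    FiniteDimensional K (MvPolynomial (Fin n) K ⧸ J) ∧
    Module.finrank K (MvPolynomial (Fin n) K ⧸ J) ≤ t :=
  stmt9_general t u hstable J hJ
end
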